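/- Let F be a field, char(F) ≠ 2, and let Γ = SU₃(F[t]) be the group of matrices g ∈ SL₃(F[√t]) preserving the hermitian form h(x,y,z) = x z̄ + y ȳ + z x̄ (i.e., ḡᵀ·S·g = S where S is the antidiagonal identity matrix, with ¯ the involution √t ↦ -√t). Then the evaluation map t ↦ 0 restricts to a surjective homomorphism Γ → SO₃(F) where SO₃ is the special orthogonal group of q(x,y,z) = 2xz + y², and Γ ∩ SL₃(F) maps isomorphically, giving a splitting. -/
import Mathlib


open Polynomial Matrix

/-- The involution of `F[√t]` (modelled as `F[X]` with `X = √t`) sending `√t ↦ -√t`. -/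
noncomputable def bar (F : Type) [Field F] : Polynomial F →+* Polynomial F :=
  (Polynomial.aeval (-Polynomial.X : Polynomial F)).toRingHom

/-- The antidiagonal matrix of the hermitian form `h(x,y,z) = x z̄ + y ȳ + z x̄`
(equivalently, the Gram matrix of the quadratic form `q(x,y,z) = 2xz + y²`). -/
def Smat (R : Type) [CommRing R] : Matrix (Fin 3) (Fin 3) R :=
  !![0, 0, 1; 0, 1, 0; 1, 0, 0]

/-- `Γ = SU₃(F[t])`: matrices `g ∈ SL₃(F[√t])` with `ḡᵀ · S · g = S`. -/
noncomputable def SU3Gamma (F : Type) [Field F] :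
    Subgroup (Matrix (Fin 3) (Fin 3) (Polynomial F))ˣ where
  carrier := {g | ((g : Matrix (Fin 3) (Fin 3) (Polynomial F))).det = 1 ∧
    ((g : Matrix (Fin 3) (Fin 3) (Polynomial F)).map (bar F))ᵀ * Smat (Polynomial F) *
      (g : Matrix (Fin 3) (Fin 3) (Polynomial F)) = Smat (Polynomial F)}
  one_mem' := by
    refine ⟨by simp, ?_⟩
    have : ((1 : Matrix (Fin 3) (Fin 3) (Polynomial F)).map (bar F)) = 1 :=
      Matrix.map_one _ (map_zero _) (map_one _)
    rw [Units.val_one, this]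
    simp
  mul_mem' := by
    rintro a b ⟨hda, ha⟩ ⟨hdb, hb⟩
    set A := (a : Matrix (Fin 3) (Fin 3) (Polynomial F))
    set B := (b : Matrix (Fin 3) (Fin 3) (Polynomial F))
    refine ⟨by rw [Units.val_mul, Matrix.det_mul]; rw [hda, hdb, one_mul], ?_⟩
    show ((A * B).map (bar F))ᵀ * Smat (Polynomial F) * (A * B) = Smat (Polynomial F)
    rw [Matrix.map_mul,
      show (A.map (bar F) * B.map (bar F))ᵀ * Smat (Polynomial F) * (A * B)
        = (B.map (bar F))ᵀ * ((A.map (bar F))ᵀ * Smat (Polynomial F) * A) * B by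
        rw [Matrix.transpose_mul]; noncomm_ring, ha, hb]
  inv_mem' := by
    rintro a ⟨hda, ha⟩
    set A := (a : Matrix (Fin 3) (Fin 3) (Polynomial F))
    set A' := ((a⁻¹ : (Matrix (Fin 3) (Fin 3) (Polynomial F))ˣ) :
      Matrix (Fin 3) (Fin 3) (Polynomial F))
    have hmul : A * A' = 1 := a.mul_inv
    have hmulm : A.map (bar F) * A'.map (bar F) = 1 := by
      rw [← Matrix.map_mul, hmul]
      exact Matrix.map_one _ (map_zero _) (map_one _)
    constructor
    · have h := congrArg Matrix.det hmul
      rw [Matrix.det_mul, hda, one_mul, Matrix.det_one] at h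
      exact h
    · show (A'.map (bar F))ᵀ * Smat (Polynomial F) * A' = Smat (Polynomial F)
      conv_lhs => rw [← ha]
      rw [show (A'.map (bar F))ᵀ * ((A.map (bar F))ᵀ * Smat (Polynomial F) * A) * A'
          = (A.map (bar F) * A'.map (bar F))ᵀ * Smat (Polynomial F) * (A * A') by
          rw [Matrix.transpose_mul]; noncomm_ring, hmul, hmulm]
      simp
  
/-- The subgroup `Γ ∩ SL₃(F)` of matrices in `Γ` with constant (`F`-valued) entries. -/
noncomputable def SU3Gamma0 (F : Type) [Field F] :
    Subgroup (Matrix (Fin 3) (Fin 3) (Polynomial F))ˣ where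
  carrier := {g | g ∈ SU3Gamma F ∧ ∃ h : Matrix (Fin 3) (Fin 3) F,
    (g : Matrix (Fin 3) (Fin 3) (Polynomial F)) = h.map (Polynomial.C : F →+* Polynomial F)}
  one_mem' :=
    ⟨(SU3Gamma F).one_mem, 1, (Matrix.map_one _ (map_zero _) (map_one _)).symm⟩
  mul_mem' := by
    rintro a b ⟨hma, h₁, hA⟩ ⟨hmb, h₂, hB⟩
    refine ⟨(SU3Gamma F).mul_mem hma hmb, h₁ * h₂, ?_⟩
    rw [Units.val_mul, hA, hB, Matrix.map_mul]
  inv_mem' := by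
    rintro a ⟨hma, h, hA⟩
    refine ⟨(SU3Gamma F).inv_mem hma, h.adjugate, ?_⟩
    have hdet : h.det = 1 := by
      have : ((a : Matrix (Fin 3) (Fin 3) (Polynomial F))).det = 1 := hma.1
      rw [hA, ← RingHom.mapMatrix_apply, ← RingHom.map_det] at this
      apply Polynomial.C_injective
      rw [this, _root_.map_one]
    have : (a : Matrix (Fin 3) (Fin 3) (Polynomial F)) *
        h.adjugate.map (Polynomial.C : F →+* Polynomial F) = 1 := by
      rw [hA, ← Matrix.map_mul, Matrix.mul_adjugate, hdet]
      simp only [one_smul]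
      exact Matrix.map_one _ (map_zero _) (map_one _)
    exact Units.inv_eq_of_mul_eq_one_right this

/-- `SO₃(F)`: the special orthogonal group of the quadratic form `q(x,y,z) = 2xz + y²`. -/
def SO3 (F : Type) [Field F] : Subgroup (Matrix (Fin 3) (Fin 3) F)ˣ where
  carrier := {h | ((h : Matrix (Fin 3) (Fin 3) F)).det = 1 ∧
    (h : Matrix (Fin 3) (Fin 3) F)ᵀ * Smat F * (h : Matrix (Fin 3) (Fin 3) F) = Smat F}
  one_mem' := by constructor <;> simp
  mul_mem' := by
    rintro a b ⟨hda, ha⟩ ⟨hdb, hb⟩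
    set A := (a : Matrix (Fin 3) (Fin 3) F)
    set B := (b : Matrix (Fin 3) (Fin 3) F)
    refine ⟨by rw [Units.val_mul, Matrix.det_mul]; rw [hda, hdb, one_mul], ?_⟩
    show (A * B)ᵀ * Smat F * (A * B) = Smat F
    rw [show (A * B)ᵀ * Smat F * (A * B) = Bᵀ * (Aᵀ * Smat F * A) * B by
      rw [Matrix.transpose_mul]; noncomm_ring, ha, hb]
  inv_mem' := by
    rintro a ⟨hda, ha⟩
    set A := (a : Matrix (Fin 3) (Fin 3) F)
    set A' := ((a⁻¹ : (Matrix (Fin 3) (Fin 3) F)ˣ) : Matrix (Fin 3) (Fin 3) F)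
    have hmul : A * A' = 1 := a.mul_inv
    constructor
    · have h := congrArg Matrix.det hmul
      rw [Matrix.det_mul, hda, one_mul, Matrix.det_one] at h
      exact h
    · show A'ᵀ * Smat F * A' = Smat F
      conv_lhs => rw [← ha]
      rw [show A'ᵀ * (Aᵀ * Smat F * A) * A' = (A * A')ᵀ * Smat F * (A * A') by
        rw [Matrix.transpose_mul]; noncomm_ring, hmul]
      simp

/-- The evaluation `t ↦ 0` (i.e. `√t ↦ 0`) on units of 3×3 matrices. -/
noncomputable def ev0 (F : Type) [Field F] :
    (Matrix (Fin 3) (Fin 3) (Polynomial F))ˣ →* (Matrix (Fin 3) (Fin 3) F)ˣ :=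
  Units.map ((RingHom.mapMatrix (Polynomial.evalRingHom (0 : F))).toMonoidHom)

section Aux

variable (F : Type) [Field F]

lemma eval0_bar : (Polynomial.evalRingHom (0 : F)).comp (bar F) =
    Polynomial.evalRingHom (0 : F) := by
  apply Polynomial.ringHom_ext <;> simp [bar]

lemma bar_C (a : F) : bar F (Polynomial.C a) = Polynomial.C a := by
  simp [bar]

lemma eval0_C (a : F) : Polynomial.evalRingHom (0 : F) (Polynomial.C a) = a := by
  simp

lemma Smat_map {R S : Type} [CommRing R] [CommRing S] (f : R →+* S) :
    (Smat R).map f = Smat S := by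
  ext i j
  fin_cases i <;> fin_cases j <;>
    simp [Smat, Matrix.map_apply, Matrix.vecHead, Matrix.vecTail]

lemma ev0_val (g : (Matrix (Fin 3) (Fin 3) (Polynomial F))ˣ) :
    ((ev0 F g : (Matrix (Fin 3) (Fin 3) F)ˣ) : Matrix (Fin 3) (Fin 3) F) =
      (g : Matrix (Fin 3) (Fin 3) (Polynomial F)).map (Polynomial.evalRingHom (0 : F)) :=
  rfl

lemma mem_SO3_of_mem_SU3Gamma (g : (Matrix (Fin 3) (Fin 3) (Polynomial F))ˣ)
    (hg : g ∈ SU3Gamma F) : ev0 F g ∈ SO3 F := by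
  obtain ⟨hdet, hform⟩ := hg
  set φ := Polynomial.evalRingHom (0 : F)
  constructor
  · show ((g : Matrix (Fin 3) (Fin 3) (Polynomial F)).map φ).det = 1
    rw [← RingHom.mapMatrix_apply, ← RingHom.map_det, hdet]; exact φ.map_one
  · show ((g : Matrix (Fin 3) (Fin 3) (Polynomial F)).map φ)ᵀ * Smat F *
      ((g : Matrix (Fin 3) (Fin 3) (Polynomial F)).map φ) = Smat F
    have h := congrArg (RingHom.mapMatrix φ) hform
    simp only [RingHom.mapMatrix_apply, Matrix.map_mul] at h
    rw [Smat_map, Matrix.transpose_map] at h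
    rw [Matrix.map_map, ← RingHom.coe_comp, eval0_bar] at h
    exact h

lemma constLift_mem (h : (Matrix (Fin 3) (Fin 3) F)ˣ) (hh : h ∈ SO3 F) :
    ∃ u ∈ SU3Gamma0 F, ev0 F u = h := by
  obtain ⟨hdet, hform⟩ := hh
  set ψ := (Polynomial.C : F →+* Polynomial F)
  set A := ((h : Matrix (Fin 3) (Fin 3) F)).map ψ
  set B := (((h⁻¹ : (Matrix (Fin 3) (Fin 3) F)ˣ) : Matrix (Fin 3) (Fin 3) F)).map ψ
  have hAB : A * B = 1 := by
    rw [← Matrix.map_mul, h.mul_inv]; exact Matrix.map_one _ (map_zero _) (_root_.map_one _)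
  have hBA : B * A = 1 := by
    rw [← Matrix.map_mul, h.inv_mul]; exact Matrix.map_one _ (map_zero _) (_root_.map_one _)
  refine ⟨⟨A, B, hAB, hBA⟩, ⟨⟨?_, ?_⟩, (h : Matrix (Fin 3) (Fin 3) F), rfl⟩, ?_⟩
  · show (((h : Matrix (Fin 3) (Fin 3) F)).map ψ).det = 1
    rw [← RingHom.mapMatrix_apply, ← RingHom.map_det, hdet]; exact ψ.map_one
  · show (A.map (bar F))ᵀ * Smat (Polynomial F) * A = Smat (Polynomial F)
    have hAbar : A.map (bar F) = A := by
      rw [Matrix.map_map]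
      have : (bar F).comp ψ = ψ := RingHom.ext fun a => bar_C F a
      rw [← RingHom.coe_comp, this]
    rw [hAbar]
    have h2 := congrArg (RingHom.mapMatrix ψ) hform
    simp only [RingHom.mapMatrix_apply, Matrix.map_mul] at h2
    rw [Smat_map, Matrix.transpose_map] at h2
    exact h2
  · apply Units.ext
    show A.map (Polynomial.evalRingHom (0 : F)) = (h : Matrix (Fin 3) (Fin 3) F)
    rw [Matrix.map_map]
    have : (Polynomial.evalRingHom (0 : F)).comp ψ = RingHom.id F := by
      ext a; simp [ψ]
    rw [← RingHom.coe_comp, this]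
    rfl

end Aux

/-- the evaluation map `t ↦ 0` restricts to a surjective homomorphism
`Γ = SU₃(F[t]) → SO₃(F)`, and the subgroup `Γ ∩ SL₃(F)` of constant matrices maps
bijectively onto `SO₃(F)`, giving a splitting of `1 → Γ(t) → Γ → SO₃(F) → 1`. -/
theorem stmt15 (F : Type) [Field F] (hchar : ringChar F ≠ 2) :
    Subgroup.map (ev0 F) (SU3Gamma F) = SO3 F ∧
    Subgroup.map (ev0 F) (SU3Gamma0 F) = SO3 F ∧
    Set.InjOn (ev0 F) (SU3Gamma0 F : Set (Matrix (Fin 3) (Fin 3) (Polynomial F))ˣ) := by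
  
  have hsub : SU3Gamma0 F ≤ SU3Gamma F := fun g hg => hg.1
  have h1 : Subgroup.map (ev0 F) (SU3Gamma F) ≤ SO3 F := by
    rintro x ⟨g, hg, rfl⟩
    exact mem_SO3_of_mem_SU3Gamma F g hg
  have h2 : SO3 F ≤ Subgroup.map (ev0 F) (SU3Gamma0 F) := by
    intro h hh
    obtain ⟨u, hu, hue⟩ := constLift_mem F h hh
    exact ⟨u, hu, hue⟩
  have h3 : Subgroup.map (ev0 F) (SU3Gamma0 F) ≤ Subgroup.map (ev0 F) (SU3Gamma F) :=
    Subgroup.map_mono hsub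
  refine ⟨le_antisymm h1 (le_trans h2 h3), le_antisymm (le_trans h3 h1) h2, ?_⟩
  rintro u ⟨-, Au, hAu⟩ v ⟨-, Av, hAv⟩ huv
  apply Units.ext
  have key : ∀ (A : Matrix (Fin 3) (Fin 3) F),
      (A.map (Polynomial.C : F →+* Polynomial F)).map (Polynomial.evalRingHom (0 : F)) = A := by
    intro A
    rw [Matrix.map_map]
    have : (Polynomial.evalRingHom (0 : F)).comp (Polynomial.C : F →+* Polynomial F) =
        RingHom.id F := by ext a; simp
    rw [← RingHom.coe_comp, this]
    rfl
  have := congrArg (Units.val) huv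
  rw [ev0_val, ev0_val, hAu, hAv, key, key] at this
  rw [hAu, hAv, this]
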